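/- arXiv:math/0606671 — 3 statements merged into one kernel-verified Lean document; each statement's English description precedes it below -/
import Mathlib

section
/- Let D be an integral domain, ⋆ a semistar operation on D, and let v(D^⋆) be the semistar operation on D defined by E^{v(D^⋆)} := (D^⋆ : (D^⋆ : E)) for each E ∈ F̄(D). If D is a ⋆-domain, then D is a v(D^⋆)-domain and ⋆_f = (v(D^⋆))_f. -/
/-!
Since `(D^⋆ : E^⋆) = (D^⋆ : E)`, the operation `v(D^⋆)` factors through `⋆`; hence
`(I I⁻¹)^⋆ = D^⋆` forces `(I I⁻¹)^{v(D^⋆)} = D^{v(D^⋆)}`. Conversely, if `F` is finitely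
generated and `x ∈ F^{v(D^⋆)}`, then `x F⁻¹ ⊆ D^⋆`, so `x D^⋆ = x (F F⁻¹)^⋆ ⊆ (D^⋆ F)^⋆ = F^⋆`.
Thus `⋆` and `v(D^⋆)` agree on `f(D)`, which is all that `⋆_f` sees.
-/

open Submodule

namespace Semistar

/-- A semistar operation on an integral domain `D` with quotient field `K`:
a map on `D`-submodules of `K` satisfying the semistar axioms on nonzero submodules. -/
structure SemistarOp (D K : Type*) [CommRing D] [Field K] [Algebra D K] where
  star : Submodule D K → Submodule D K
  star_smul_mul : ∀ x : K, x ≠ 0 → ∀ E : Submodule D K, E ≠ ⊥ →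
    star (span D {x} * E) = span D {x} * star E
  star_mono : ∀ E F : Submodule D K, E ≠ ⊥ → F ≠ ⊥ → E ≤ F → star E ≤ star F
  le_star : ∀ E : Submodule D K, E ≠ ⊥ → E ≤ star E
  star_star : ∀ E : Submodule D K, E ≠ ⊥ → star (star E) = star E

variable {D K : Type*} [CommRing D] [Field K] [Algebra D K]

/-- The finite-type semistar operation `⋆_f` associated to `⋆`. -/
def finStar (t : Submodule D K → Submodule D K) : Submodule D K → Submodule D K :=
  fun E => ⨆ F ∈ {F : Submodule D K | F ≠ ⊥ ∧ F.FG ∧ F ≤ E}, t F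

/-- The image in `K` of an ideal of `D`. -/
def idealToK (I : Ideal D) : Submodule D K :=
  Submodule.map (Algebra.linearMap D K) I

/-- `I` is a quasi-`⋆`-ideal: a nonzero ideal of `D` with `I^⋆ ∩ D = I`. -/
def IsQuasiIdeal (t : Submodule D K → Submodule D K) (I : Ideal D) : Prop :=
  I ≠ ⊥ ∧ t (idealToK I) ⊓ 1 = idealToK I

/-- `M` is a quasi-`⋆`-maximal ideal: maximal among quasi-`⋆`-ideals. -/
def IsQuasiMaximal (t : Submodule D K → Submodule D K) (M : Ideal D) : Prop :=
  IsQuasiIdeal t M ∧ ∀ J : Ideal D, IsQuasiIdeal t J → M ≤ J → M = J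

/-- The localization `E·D_M` of a submodule `E` of `K` at (the complement of) an ideal `M`. -/
def locAt (M : Ideal D) (E : Submodule D K) : Submodule D K where
  carrier := {x : K | ∃ s ∈ Submonoid.closure ((M : Set D)ᶜ), s • x ∈ E}
  add_mem' := by
    rintro x y ⟨s, hs, hsx⟩ ⟨t, ht, hty⟩
    refine ⟨s * t, mul_mem hs ht, ?_⟩
    have h1 : (s * t) • x ∈ E := by rw [mul_comm, mul_smul]; exact E.smul_mem t hsx
    have h2 : (s * t) • y ∈ E := by rw [mul_smul]; exact E.smul_mem s hty
    rw [smul_add]; exact E.add_mem h1 h2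
  zero_mem' := ⟨1, Submonoid.one_mem _, by simp⟩
  smul_mem' := by
    rintro c x ⟨s, hs, hsx⟩
    exact ⟨s, hs, by rw [smul_comm]; exact E.smul_mem c hsx⟩

/-- The spectral semistar operation `⋆̃` associated to `⋆`, defined by
`E^⋆̃ = ⋂ { E·D_M : M quasi-`⋆_f`-maximal }`. -/
def tildeStar (s : SemistarOp D K) : Submodule D K → Submodule D K :=
  fun E => ⨅ M ∈ {M : Ideal D | IsQuasiMaximal (finStar s.star) M}, locAt M E

/-- The localizing system `F^⋆` of ideals `I` with `I^⋆ = D^⋆`. -/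
def starLS (s : SemistarOp D K) : Set (Ideal D) :=
  {I : Ideal D | I ≠ ⊥ ∧ s.star (idealToK I) = s.star 1}

/-- The stable semistar operation `⋆̄` associated to `⋆`:
`E^⋆̄ = ⋃ {(E : J) : J ∈ F^⋆}`. -/
def barStar (s : SemistarOp D K) : Submodule D K → Submodule D K :=
  fun E => ⨆ J ∈ starLS s, E / idealToK J

/-- `I` is `⋆`-invertible: `(I·I⁻¹)^⋆ = D^⋆`. -/
def IsStarInvertible (t : Submodule D K → Submodule D K) (I : Submodule D K) : Prop :=
  t (I * (1 / I)) = t 1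

/-- `D` is a `⋆`-domain: every nonzero finitely generated `D`-submodule of `K`
is `⋆`-invertible. -/
def IsStarDomain (t : Submodule D K → Submodule D K) : Prop :=
  ∀ I : Submodule D K, I ≠ ⊥ → I.FG → IsStarInvertible t I

/-- `D` is a Prüfer `⋆`-multiplication domain: every nonzero finitely generated
ideal of `D` is `⋆_f`-invertible. -/
def IsPMD (t : Submodule D K → Submodule D K) : Prop :=
  ∀ I : Submodule D K, I ≠ ⊥ → I.FG → I ≤ 1 → IsStarInvertible (finStar t) I

/-- `D` is a P⋆MD for the semistar operation `s`. -/
abbrev IsPStarMD (s : SemistarOp D K) : Prop := IsPMD s.star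

/-- Equality of two semistar operations (as maps on nonzero submodules):
`D` is a `(∗₁, ∗₂)`-domain. -/
def StarEq (t₁ t₂ : Submodule D K → Submodule D K) : Prop :=
  ∀ E : Submodule D K, E ≠ ⊥ → t₁ E = t₂ E

/-- `⋆` is a.b. -/
def IsAB (t : Submodule D K → Submodule D K) : Prop :=
  ∀ E : Submodule D K, E ≠ ⊥ → E.FG → ∀ F G : Submodule D K, F ≠ ⊥ → G ≠ ⊥ →
    t (E * F) ≤ t (E * G) → t F ≤ t G

/-- `⋆` is e.a.b. -/
def IsEAB (t : Submodule D K → Submodule D K) : Prop :=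
  ∀ E F G : Submodule D K, E ≠ ⊥ → E.FG → F ≠ ⊥ → F.FG → G ≠ ⊥ → G.FG →
    t (E * F) ≤ t (E * G) → t F ≤ t G

/-- `D` is quasi-`⋆`-integrally closed: `D^⋆ = ⋃ {(F^⋆ : F^⋆) : F ∈ f(D)}`. -/
def IsQuasiStarIntegrallyClosed (t : Submodule D K → Submodule D K) : Prop :=
  (t 1 : Set K) = ⋃ F ∈ {F : Submodule D K | F ≠ ⊥ ∧ F.FG}, ((t F / t F : Submodule D K) : Set K)

/-- The submodule `S` of `K` is integrally closed in `K`. -/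
def IsIntegrallyClosedIn (S : Submodule D K) : Prop :=
  ∀ x : K, (∃ p : Polynomial K, p.Monic ∧ (∀ i, p.coeff i ∈ S) ∧ Polynomial.eval x p = 0) → x ∈ S

/-- `D` is `⋆`-Noetherian: ACC on quasi-`⋆`-ideals. -/
def IsStarNoetherian (t : Submodule D K → Submodule D K) : Prop :=
  ∀ c : ℕ → Ideal D, (∀ n, IsQuasiIdeal t (c n)) → Monotone c →
    ∃ n, ∀ m, n ≤ m → c m = c n

/-- `D` is `⋆`-extracoherent. -/
def IsExtraCoherent (t : Submodule D K → Submodule D K) : Prop :=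
  ∀ E F : Submodule D K, E ≠ ⊥ → E.FG → F ≠ ⊥ → F.FG → E ⊓ F ≠ ⊥ →
    ∃ J : Submodule D K, J ≠ ⊥ ∧ J.FG ∧ J ≤ E ⊓ F ∧ t J = t E ⊓ t F

/-- `D` is truly `⋆`-coherent. -/
def IsTrulyCoherent (t : Submodule D K → Submodule D K) : Prop :=
  ∀ E F : Submodule D K, E ≠ ⊥ → E.FG → F ≠ ⊥ → F.FG → E ⊓ F ≠ ⊥ →
    ∃ J : Submodule D K, J ≠ ⊥ ∧ J.FG ∧ t J = t (E ⊓ F)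

/-- `D` is `⋆`-coherent. -/
def IsCoherent (t : Submodule D K → Submodule D K) : Prop :=
  ∀ E F : Submodule D K, E ≠ ⊥ → E.FG → F ≠ ⊥ → F.FG → E ⊓ F ≠ ⊥ →
    ∃ J : Submodule D K, J ≠ ⊥ ∧ J.FG ∧ t J = t E ⊓ t F

/-- `D` is `⋆`-quasi-coherent. -/
def IsQuasiCoherent (t : Submodule D K → Submodule D K) : Prop :=
  ∀ F : Submodule D K, F ≠ ⊥ → F.FG →
    ∃ G : Submodule D K, G ≠ ⊥ ∧ G.FG ∧ t ((1 : Submodule D K) / F) = t G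

/-- `D` is an `H(⋆)`-domain. -/
def IsHDomain (t : Submodule D K → Submodule D K) : Prop :=
  ∀ I : Ideal D, I ≠ ⊥ → t (idealToK I) = t 1 →
    ∃ J : Ideal D, J ≠ ⊥ ∧ J.FG ∧ J ≤ I ∧ t (idealToK J) = t 1

/-- `D` is an `I(⋆)`-domain. -/
def IsIDomain (s : SemistarOp D K) : Prop :=
  ∀ I : Submodule D K, I ≠ ⊥ → I.FG → I ≤ 1 →
    (IsStarInvertible s.star I ↔ IsStarInvertible (finStar s.star) I)

section Colon

variable {R A : Type*} [CommSemiring R] [CommSemiring A] [Algebra R A]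

theorem div_anti_right (M : Submodule R A) {I J : Submodule R A} (h : I ≤ J) : M / J ≤ M / I :=
  Submodule.le_div_iff_mul_le.mpr
    ((mul_le_mul' le_rfl h).trans (Submodule.le_div_iff_mul_le.mp le_rfl))

theorem div_mono_left {M N : Submodule R A} (I : Submodule R A) (h : M ≤ N) : M / I ≤ N / I :=
  Submodule.le_div_iff_mul_le.mpr ((Submodule.le_div_iff_mul_le.mp le_rfl).trans h)

theorem le_div_div_self (M I : Submodule R A) : I ≤ M / (M / I) := by
  rw [Submodule.le_div_iff_mul_le, mul_comm]
  exact Submodule.le_div_iff_mul_le.mp le_rfl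

end Colon

theorem one_submodule_ne_bot : (1 : Submodule D K) ≠ ⊥ :=
  (Submodule.ne_bot_iff _).mpr ⟨1, one_le.mp le_rfl, one_ne_zero⟩

theorem mul_ne_bot {A B : Submodule D K} (hA : A ≠ ⊥) (hB : B ≠ ⊥) : A * B ≠ ⊥ :=
  mul_eq_bot.not.mpr (not_or.mpr ⟨hA, hB⟩)

theorem one_div_ne_bot_of_fg [IsFractionRing D K] {F : Submodule D K} (hF : F.FG) :
    (1 : Submodule D K) / F ≠ ⊥ := by
  have : Nontrivial D := (IsFractionRing.nontrivial_iff_nontrivial D K).mpr inferInstance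
  obtain ⟨a, ha, hint⟩ := FractionalIdeal.isFractional_of_fg (S := nonZeroDivisors D) hF
  refine (Submodule.ne_bot_iff _).mpr ⟨algebraMap D K a, fun b hb => ?_,
    IsFractionRing.to_map_ne_zero_of_mem_nonZeroDivisors ha⟩
  obtain ⟨d, hd⟩ := hint b hb
  exact mem_one.mpr ⟨d, by rw [hd, Algebra.smul_def]⟩

theorem finStar_eq_of_eq_on_fg {t₁ t₂ : Submodule D K → Submodule D K}
    (h : ∀ F : Submodule D K, F ≠ ⊥ → F.FG → t₁ F = t₂ F) : finStar t₁ = finStar t₂ :=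
  funext fun _ => iSup_congr fun F => iSup_congr fun hF => h F hF.1 hF.2.1

namespace SemistarOp

variable (s : SemistarOp D K)

theorem star_ne_bot {E : Submodule D K} (hE : E ≠ ⊥) : s.star E ≠ ⊥ :=
  fun h => hE (le_bot_iff.mp (h ▸ s.le_star E hE))

theorem one_le_star_one : (1 : Submodule D K) ≤ s.star 1 :=
  s.le_star 1 one_submodule_ne_bot

theorem star_mul_le_star_mul {A : Submodule D K} (hA : A ≠ ⊥) (B : Submodule D K) :
    s.star A * B ≤ s.star (A * B) := by
  refine mul_le.mpr fun x hx b hb => ?_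
  obtain rfl | hb0 := eq_or_ne b 0
  · rw [mul_zero]; exact zero_mem _
  have hB : B ≠ ⊥ := (Submodule.ne_bot_iff _).mpr ⟨b, hb, hb0⟩
  have hbA : span D {b} * A ≤ A * B := by
    rw [mul_comm]; exact mul_le_mul' le_rfl (span_le.mpr (by simpa using hb))
  have hxb : x * b ∈ s.star (span D {b} * A) := by
    rw [s.star_smul_mul b hb0 A hA]
    exact mul_mem_mul_rev (mem_span_singleton_self b) hx
  exact s.star_mono _ _ (mul_ne_bot (by simpa using hb0) hA) (mul_ne_bot hA hB) hbA hxb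

theorem star_star_mul {A B : Submodule D K} (hA : A ≠ ⊥) (hB : B ≠ ⊥) :
    s.star (s.star A * B) = s.star (A * B) := by
  have hAB := mul_ne_bot hA hB
  apply le_antisymm
  · simpa [s.star_star _ hAB] using
      s.star_mono _ _ (mul_ne_bot (s.star_ne_bot hA) hB) (s.star_ne_bot hAB)
        (s.star_mul_le_star_mul hA B)
  · exact s.star_mono _ _ hAB (mul_ne_bot (s.star_ne_bot hA) hB)
      (mul_le_mul' (s.le_star A hA) le_rfl)

theorem star_one_div_star {E : Submodule D K} (hE : E ≠ ⊥) :
    s.star 1 / s.star E = s.star 1 / E := by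
  refine le_antisymm (div_anti_right _ (s.le_star E hE)) (Submodule.le_div_iff_mul_le.mpr ?_)
  obtain hbot | hne := eq_or_ne (s.star 1 / E) ⊥
  · simp [hbot]
  have hmul : E * (s.star 1 / E) ≤ s.star 1 := by
    rw [mul_comm]; exact Submodule.le_div_iff_mul_le.mp le_rfl
  calc s.star 1 / E * s.star E
      = s.star E * (s.star 1 / E) := mul_comm _ _
    _ ≤ s.star (E * (s.star 1 / E)) := s.star_mul_le_star_mul hE _
    _ ≤ s.star (s.star 1) :=
        s.star_mono _ _ (mul_ne_bot hE hne) (s.star_ne_bot one_submodule_ne_bot) hmul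
    _ = s.star 1 := s.star_star 1 one_submodule_ne_bot

/-- The operation `v(D^⋆)`. -/
def vOp (E : Submodule D K) : Submodule D K :=
  s.star 1 / (s.star 1 / E)

theorem vOp_star {E : Submodule D K} (hE : E ≠ ⊥) : s.vOp (s.star E) = s.vOp E := by
  rw [vOp, vOp, s.star_one_div_star hE]

theorem star_le_vOp {E : Submodule D K} (hE : E ≠ ⊥) : s.star E ≤ s.vOp E := by
  rw [← s.vOp_star hE]
  exact le_div_div_self _ _

theorem vOp_eq_vOp_one_of_star_eq {J : Submodule D K} (hJ : J ≠ ⊥) (h : s.star J = s.star 1) :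
    s.vOp J = s.vOp 1 := by
  rw [← s.vOp_star hJ, h, s.vOp_star one_submodule_ne_bot]

theorem vOp_le_star_of_isStarInvertible {F : Submodule D K} (hF : F ≠ ⊥)
    (hFF : F * (1 / F) ≠ ⊥) (h : IsStarInvertible s.star F) : s.vOp F ≤ s.star F := by
  intro x hx
  obtain rfl | hx0 := eq_or_ne x 0
  · exact zero_mem _
  have hxs : span D {x} ≠ ⊥ := by simpa using hx0
  have hxinv : span D {x} * (1 / F) ≤ s.star 1 :=
    (mul_le_mul' le_rfl (div_mono_left F s.one_le_star_one)).trans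
      (Submodule.le_div_iff_mul_le.mp ((span_singleton_le_iff_mem _ _).mpr hx))
  have hspan : span D {x} ≤ s.star F :=
    calc span D {x} = span D {x} * 1 := (mul_one _).symm
      _ ≤ span D {x} * s.star 1 := mul_le_mul' le_rfl s.one_le_star_one
      _ = s.star (span D {x} * (F * (1 / F))) := by
          rw [s.star_smul_mul x hx0 _ hFF, ← show s.star (F * (1 / F)) = s.star 1 from h]
      _ ≤ s.star (s.star 1 * F) := s.star_mono _ _ (mul_ne_bot hxs hFF)
          (mul_ne_bot (s.star_ne_bot one_submodule_ne_bot) hF)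
          (by rw [mul_comm F, ← mul_assoc]; exact mul_le_mul' hxinv le_rfl)
      _ = s.star F := by rw [s.star_star_mul one_submodule_ne_bot hF, one_mul]
  exact hspan (mem_span_singleton_self x)

variable [IsFractionRing D K]

theorem star_eq_vOp_of_fg (h : IsStarDomain s.star) {F : Submodule D K} (hF : F ≠ ⊥)
    (hfg : F.FG) : s.star F = s.vOp F :=
  le_antisymm (s.star_le_vOp hF) (s.vOp_le_star_of_isStarInvertible hF
    (mul_ne_bot hF (one_div_ne_bot_of_fg hfg)) (h F hF hfg))

theorem isStarDomain_vOp (h : IsStarDomain s.star) : IsStarDomain s.vOp :=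
  fun I hI hfg => s.vOp_eq_vOp_one_of_star_eq (mul_ne_bot hI (one_div_ne_bot_of_fg hfg))
    (h I hI hfg)

end SemistarOp

theorem statement1_general {D K : Type*} [CommRing D] [Field K] [Algebra D K]
    [IsFractionRing D K] (s : SemistarOp D K)
    (h : IsStarDomain s.star) :
    IsStarDomain (fun E : Submodule D K => s.star 1 / (s.star 1 / E)) ∧
    StarEq (finStar s.star) (finStar (fun E : Submodule D K => s.star 1 / (s.star 1 / E))) := by
  refine ⟨s.isStarDomain_vOp h, fun E _ => ?_⟩
  rw [finStar_eq_of_eq_on_fg fun F hF hfg => s.star_eq_vOp_of_fg h hF hfg]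
  rfl

theorem statement1 {D K : Type*} [CommRing D] [IsDomain D] [Field K] [Algebra D K]
    [IsFractionRing D K] (s : SemistarOp D K)
    (h : IsStarDomain s.star) :
    IsStarDomain (fun E : Submodule D K => s.star 1 / (s.star 1 / E)) ∧
    StarEq (finStar s.star) (finStar (fun E : Submodule D K => s.star 1 / (s.star 1 / E))) :=
  statement1_general s h

end Semistar
end

section
/- Let D be an integral domain and ⋆ a semistar operation on D. The following are equivalent: (i) D is a ⋆-domain [respectively: a P⋆MD]; (ii) for all E, F ∈ f(D) there exists a nonzero fractional ideal H of D [respectively: H ∈ f(D)] with H ⊆ (E : F) such that E^⋆ = (FH)^⋆; (iii) for all E, F ∈ f(D), (F·(E : F))^⋆ = E^⋆ [respectively: (F·(E : F))^{⋆_f} = E^⋆]. -/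
/-! Write `F⁻¹ = (D : F)`. Everything rests on the sandwich `E·(F·F⁻¹) ⊆ F·(E : F) ⊆ E`.
When `1 ∈ (F·F⁻¹)^⋆` we get `E^⋆ ⊆ (E·F·F⁻¹)^⋆`, so the sandwich collapses under `⋆`;
conversely, taking `E = D` in (ii) or (iii) gives the `⋆`-invertibility of `F`.
For a P⋆MD, after scaling `F` into `D`, `1 ∈ (F·F⁻¹)^{⋆_f}` is witnessed by a finitely
generated `G ⊆ F·F⁻¹` with `1 ∈ G^⋆`. Since finitely generated submodules are compact
elements of the submodule lattice, such finite witnesses always exist, and they also yield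
the finitely generated `H ⊆ (E : F)` of (ii). -/

open Submodule

theorem IsCompactElement.exists_le_of_le_biSup {α β : Type*} [CompleteLattice α]
    [Preorder β] {k : α} (hk : IsCompactElement k) {S : Set β} (hne : S.Nonempty)
    (hdir : DirectedOn (· ≤ ·) S) {f : β → α} (hf : MonotoneOn f S) (h : k ≤ ⨆ i ∈ S, f i) :
    ∃ i ∈ S, k ≤ f i := by
  rw [CompleteLattice.isCompactElement_iff_le_of_directed_sSup_le] at hk
  obtain ⟨-, ⟨i, hi, rfl⟩, hki⟩ := hk (f '' S) (hne.image f)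
    (directedOn_image.mpr (hdir.mono' fun _ ha _ hb hab => hf ha hb hab)) (by rwa [sSup_image])
  exact ⟨i, hi, hki⟩

namespace Submodule

variable {R A : Type*} [CommSemiring R] [CommSemiring A] [Algebra R A]

theorem one_ne_bot [Nontrivial A] : (1 : Submodule R A) ≠ ⊥ :=
  (Submodule.ne_bot_iff _).mpr ⟨1, one_le.mp le_rfl, one_ne_zero⟩

theorem fg_one : (1 : Submodule R A).FG :=
  one_eq_span (R := R) (A := A) ▸ fg_span_singleton 1

theorem mul_ne_bot [NoZeroDivisors A] {E F : Submodule R A} (hE : E ≠ ⊥) (hF : F ≠ ⊥) :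
    E * F ≠ ⊥ := by
  simp [hE, hF]

theorem mul_div_le (E F : Submodule R A) : F * (E / F) ≤ E := by
  rw [mul_comm]
  exact le_div_iff_mul_le.mp le_rfl

theorem mul_one_div_le_div (E F : Submodule R A) : E * (1 / F) ≤ E / F := by
  rw [le_div_iff_mul_le, mul_assoc, mul_comm _ F]
  simpa using mul_le_mul_right (mul_div_le 1 F) E

theorem mul_mul_one_div_le_mul_div (E F : Submodule R A) : E * (F * (1 / F)) ≤ F * (E / F) := by
  rw [mul_left_comm]
  exact mul_le_mul_right (mul_one_div_le_div E F) F

theorem mul_mul_one_div_mul_le (X F : Submodule R A) : X * F * (1 / (X * F)) ≤ F * (1 / F) := by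
  rw [mul_comm X, mul_assoc]
  refine mul_le_mul_right ?_ F
  rw [le_div_iff_mul_le, mul_assoc, mul_comm _ F, ← mul_assoc, mul_comm _ X]
  exact mul_div_le 1 (X * F)

theorem exists_fg_le_of_le_mul {F C G : Submodule R A} (hG : G.FG) (h : G ≤ F * C) :
    ∃ C₀ : Submodule R A, C₀.FG ∧ C₀ ≤ C ∧ G ≤ F * C₀ := by
  have hC : F * C ≤ ⨆ C₀ ∈ {C₀ : Submodule R A | C₀.FG ∧ C₀ ≤ C}, F * C₀ := by
    refine mul_le.mpr fun f hf c hc => ?_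
    exact le_iSup₂ (f := fun C₀ _ => F * C₀) (span R {c})
      ⟨fg_span_singleton c, (span_singleton_le_iff_mem c C).mpr hc⟩
      (mul_mem_mul hf (mem_span_singleton_self c))
  obtain ⟨C₀, ⟨hC₀, hC₀C⟩, hGC₀⟩ := ((fg_iff_compact G).mp hG).exists_le_of_le_biSup
    (S := {C₀ : Submodule R A | C₀.FG ∧ C₀ ≤ C}) ⟨⊥, fg_bot, bot_le⟩
    (fun C₁ h₁ C₂ h₂ => ⟨C₁ ⊔ C₂, ⟨h₁.1.sup h₂.1, sup_le h₁.2 h₂.2⟩, le_sup_left, le_sup_right⟩)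
    (fun _ _ _ _ hle => mul_le_mul_right hle F) (h.trans hC)
  exact ⟨C₀, hC₀, hC₀C, hGC₀⟩

end Submodule

namespace Semistar

variable {D K : Type*} [CommRing D] [Field K] [Algebra D K]

section FractionField

variable [IsFractionRing D K]

theorem one_div_ne_bot [Nontrivial D] {F : Submodule D K} (hF : F.FG) : 1 / F ≠ ⊥ := by
  obtain ⟨a, ha, h⟩ := FractionalIdeal.isFractional_of_fg (S := nonZeroDivisors D) hF
  refine (Submodule.ne_bot_iff _).mpr ⟨algebraMap D K a,
    mem_div_iff_forall_mul_mem.mpr fun y hy => ?_,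
    IsFractionRing.to_map_ne_zero_of_mem_nonZeroDivisors ha⟩
  obtain ⟨r, hr⟩ := h y hy
  exact mem_one.mpr ⟨r, by rw [hr, Algebra.smul_def]⟩

theorem div_ne_bot [Nontrivial D] {E F : Submodule D K} (hE : E ≠ ⊥) (hF : F.FG) : E / F ≠ ⊥ :=
  ne_bot_of_le_ne_bot (mul_ne_bot hE (one_div_ne_bot hF)) (mul_one_div_le_div E F)

theorem isFractional_div {E F : Submodule D K} (hE : E.FG) (hF : F ≠ ⊥) :
    IsFractional (nonZeroDivisors D) (E / F) := by
  obtain ⟨f, hf, hf0⟩ := (Submodule.ne_bot_iff F).mp hF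
  let J : FractionalIdeal (nonZeroDivisors D) K :=
    ⟨span D {f⁻¹} * E, FractionalIdeal.isFractional_of_fg ((fg_span_singleton _).mul hE)⟩
  refine FractionalIdeal.isFractional_of_le (J := J) fun x hx => ?_
  exact mem_span_singleton_mul.mpr
    ⟨x * f, mem_div_iff_forall_mul_mem.mp hx f hf, by field_simp⟩

end FractionField

theorem finStar_mono (t : Submodule D K → Submodule D K) {E F : Submodule D K} (h : E ≤ F) :
    finStar t E ≤ finStar t F :=
  iSup₂_le fun G hG => le_iSup₂_of_le G ⟨hG.1, hG.2.1, hG.2.2.trans h⟩ le_rfl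

namespace SemistarOp

variable (s : SemistarOp D K)

theorem star_le_star_of_le_star {E G : Submodule D K} (hE : E ≠ ⊥) (hG : G ≠ ⊥)
    (h : E ≤ s.star G) : s.star E ≤ s.star G := by
  simpa only [s.star_star G hG] using s.star_mono E _ hE (s.star_ne_bot hG) h

theorem mul_star_le {X Y : Submodule D K} (hX : X ≠ ⊥) (hY : Y ≠ ⊥) :
    X * s.star Y ≤ s.star (X * Y) := by
  refine mul_le.mpr fun x hx z hz => ?_
  rcases eq_or_ne x 0 with rfl | hx0
  · simp
  have hxX : span D {x} ≤ X := (span_singleton_le_iff_mem x X).mpr hx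
  have hx : span D {x} ≠ ⊥ := by simpa using hx0
  have hxz : x * z ∈ s.star (span D {x} * Y) := by
    rw [s.star_smul_mul x hx0 Y hY]
    exact mul_mem_mul (mem_span_singleton_self x) hz
  exact s.star_mono _ _ (mul_ne_bot hx hY) (mul_ne_bot hX hY) (mul_le_mul_left hxX Y) hxz

theorem star_le_star_mul_of_one_le_star {E G : Submodule D K} (hE : E ≠ ⊥) (hG : G ≠ ⊥)
    (h : 1 ≤ s.star G) : s.star E ≤ s.star (E * G) := by
  refine s.star_le_star_of_le_star hE (mul_ne_bot hE hG) ?_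
  calc E = E * 1 := (mul_one E).symm
    _ ≤ E * s.star G := mul_le_mul_right h E
    _ ≤ s.star (E * G) := s.mul_star_le hE hG

theorem star_le_finStar {G E : Submodule D K} (hG : G ≠ ⊥) (hGfg : G.FG) (hGE : G ≤ E) :
    s.star G ≤ finStar s.star E :=
  le_iSup₂_of_le G ⟨hG, hGfg, hGE⟩ le_rfl

theorem finStar_le_star {E : Submodule D K} (hE : E ≠ ⊥) : finStar s.star E ≤ s.star E :=
  iSup₂_le fun G hG => s.star_mono G E hG.1 hE hG.2.2

theorem finStar_eq_star {E : Submodule D K} (hE : E ≠ ⊥) (hfg : E.FG) :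
    finStar s.star E = s.star E :=
  le_antisymm (s.finStar_le_star hE) (s.star_le_finStar hE hfg le_rfl)

theorem exists_fg_le_star_of_le_finStar {A B : Submodule D K} (hA : A.FG) (hB : B ≠ ⊥)
    (h : A ≤ finStar s.star B) : ∃ G, G ≠ ⊥ ∧ G.FG ∧ G ≤ B ∧ A ≤ s.star G := by
  obtain ⟨b, hb, hb0⟩ := (Submodule.ne_bot_iff B).mp hB
  have hne : {G : Submodule D K | G ≠ ⊥ ∧ G.FG ∧ G ≤ B}.Nonempty :=
    ⟨span D {b}, by simpa using hb0, fg_span_singleton b, (span_singleton_le_iff_mem b B).mpr hb⟩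
  obtain ⟨G, ⟨hG, hGfg, hGB⟩, hAG⟩ := ((fg_iff_compact A).mp hA).exists_le_of_le_biSup hne
    (fun G₁ h₁ G₂ h₂ => ⟨G₁ ⊔ G₂, ⟨ne_bot_of_le_ne_bot h₁.1 le_sup_left, h₁.2.1.sup h₂.2.1,
      sup_le h₁.2.2 h₂.2.2⟩, le_sup_left, le_sup_right⟩)
    (fun G₁ h₁ G₂ h₂ hle => s.star_mono G₁ G₂ h₁.1 h₂.1 hle) h
  exact ⟨G, hG, hGfg, hGB, hAG⟩

theorem isStarInvertible_of_star_one_eq_star_mul {I H : Submodule D K} (hI : I ≠ ⊥)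
    (hH : H ≠ ⊥) (hHI : H ≤ 1 / I) (h : s.star 1 = s.star (I * H)) :
    IsStarInvertible s.star I := by
  have hIH : I * H ≤ I * (1 / I) := mul_le_mul_right hHI I
  have hII : I * (1 / I) ≠ ⊥ := ne_bot_of_le_ne_bot (mul_ne_bot hI hH) hIH
  refine le_antisymm (s.star_mono _ _ hII one_ne_bot mul_one_div_le_one) ?_
  exact h ▸ s.star_mono _ _ (mul_ne_bot hI hH) hII hIH

theorem isStarInvertible_finStar_of_star_one_eq_star_mul {I H : Submodule D K} (hI : I ≠ ⊥)
    (hIfg : I.FG) (hH : H ≠ ⊥) (hHfg : H.FG) (hHI : H ≤ 1 / I)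
    (h : s.star 1 = s.star (I * H)) : IsStarInvertible (finStar s.star) I := by
  rw [IsStarInvertible, s.finStar_eq_star one_ne_bot fg_one]
  refine le_antisymm ((finStar_mono _ mul_one_div_le_one).trans (s.finStar_le_star one_ne_bot)) ?_
  exact h ▸ s.star_le_finStar (mul_ne_bot hI hH) (hIfg.mul hHfg) (mul_le_mul_right hHI I)

end SemistarOp

section Domains

variable [Nontrivial D] [IsFractionRing D K] (s : SemistarOp D K)

theorem IsStarDomain.star_mul_div_eq (h : IsStarDomain s.star) {E F : Submodule D K}
    (hE : E ≠ ⊥) (hF : F ≠ ⊥) (hFfg : F.FG) : s.star (F * (E / F)) = s.star E := by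
  have hFF : F * (1 / F) ≠ ⊥ := mul_ne_bot hF (one_div_ne_bot hFfg)
  have hdiv : F * (E / F) ≠ ⊥ := mul_ne_bot hF (div_ne_bot hE hFfg)
  have hinv : s.star (F * (1 / F)) = s.star 1 := h F hF hFfg
  refine le_antisymm (s.star_mono _ _ hdiv hE (mul_div_le E F)) ?_
  calc s.star E ≤ s.star (E * (F * (1 / F))) :=
        s.star_le_star_mul_of_one_le_star hE hFF (hinv ▸ s.le_star 1 one_ne_bot)
    _ ≤ s.star (F * (E / F)) :=
        s.star_mono _ _ (mul_ne_bot hE hFF) hdiv (mul_mul_one_div_le_mul_div E F)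

theorem IsPMD.one_le_finStar_mul_one_div (h : IsPMD s.star) {F : Submodule D K} (hF : F ≠ ⊥)
    (hFfg : F.FG) : 1 ≤ finStar s.star (F * (1 / F)) := by
  obtain ⟨α, hαF, hα⟩ := (Submodule.ne_bot_iff _).mp (one_div_ne_bot hFfg)
  have hαI : span D {α} * F ≤ 1 :=
    (mul_le_mul_left ((span_singleton_le_iff_mem α _).mpr hαF) F).trans
      (mul_comm F _ ▸ mul_one_div_le_one)
  have hinv : finStar s.star (span D {α} * F * (1 / (span D {α} * F))) = finStar s.star 1 :=
    h _ (mul_ne_bot (by simpa using hα) hF) ((fg_span_singleton α).mul hFfg) hαI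
  calc 1 ≤ s.star 1 := s.le_star 1 one_ne_bot
    _ = finStar s.star (span D {α} * F * (1 / (span D {α} * F))) := by
        rw [hinv, s.finStar_eq_star one_ne_bot fg_one]
    _ ≤ finStar s.star (F * (1 / F)) := finStar_mono _ (mul_mul_one_div_mul_le _ F)

theorem IsPMD.finStar_mul_div_eq (h : IsPMD s.star) {E F : Submodule D K} (hE : E ≠ ⊥)
    (hEfg : E.FG) (hF : F ≠ ⊥) (hFfg : F.FG) : finStar s.star (F * (E / F)) = s.star E := by
  obtain ⟨G, hG, hGfg, hGF, h1G⟩ := s.exists_fg_le_star_of_le_finStar fg_one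
    (mul_ne_bot hF (one_div_ne_bot hFfg)) (h.one_le_finStar_mul_one_div s hF hFfg)
  refine le_antisymm ((finStar_mono _ (mul_div_le E F)).trans (s.finStar_le_star hE)) ?_
  calc s.star E ≤ s.star (E * G) := s.star_le_star_mul_of_one_le_star hE hG h1G
    _ ≤ finStar s.star (F * (E / F)) := s.star_le_finStar (mul_ne_bot hE hG) (hEfg.mul hGfg)
        ((mul_le_mul_right hGF E).trans (mul_mul_one_div_le_mul_div E F))

theorem exists_fg_star_eq_star_mul_of_finStar_mul_div_eq {E F : Submodule D K} (hE : E ≠ ⊥)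
    (hEfg : E.FG) (hF : F ≠ ⊥) (hFfg : F.FG) (h : finStar s.star (F * (E / F)) = s.star E) :
    ∃ H : Submodule D K, H ≠ ⊥ ∧ H.FG ∧ H ≤ E / F ∧ s.star E = s.star (F * H) := by
  obtain ⟨G, hG, hGfg, hGle, hEG⟩ := s.exists_fg_le_star_of_le_finStar hEfg
    (mul_ne_bot hF (div_ne_bot hE hFfg)) (h ▸ s.le_star E hE)
  obtain ⟨H, hHfg, hHle, hGH⟩ := exists_fg_le_of_le_mul hGfg hGle
  have hH : H ≠ ⊥ := by
    rintro rfl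
    exact hG (le_bot_iff.mp (by simpa using hGH))
  have hFH : F * H ≠ ⊥ := mul_ne_bot hF hH
  refine ⟨H, hH, hHfg, hHle, le_antisymm ?_ ?_⟩
  · exact (s.star_le_star_of_le_star hE hG hEG).trans (s.star_mono _ _ hG hFH hGH)
  · exact s.star_mono _ _ hFH hE ((mul_le_mul_right hHle F).trans (mul_div_le E F))

end Domains

theorem statement4 {D K : Type*} [CommRing D] [IsDomain D] [Field K] [Algebra D K]
    [IsFractionRing D K] (s : SemistarOp D K) :
    ((IsStarDomain s.star ↔
        ∀ E F : Submodule D K, E ≠ ⊥ → E.FG → F ≠ ⊥ → F.FG →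
          ∃ H : Submodule D K, H ≠ ⊥ ∧ IsFractional (nonZeroDivisors D) H ∧ H ≤ E / F ∧
            s.star E = s.star (F * H)) ∧
      (IsStarDomain s.star ↔
        ∀ E F : Submodule D K, E ≠ ⊥ → E.FG → F ≠ ⊥ → F.FG →
          s.star (F * (E / F)) = s.star E)) ∧
    ((IsPStarMD s ↔
        ∀ E F : Submodule D K, E ≠ ⊥ → E.FG → F ≠ ⊥ → F.FG →
          ∃ H : Submodule D K, H ≠ ⊥ ∧ H.FG ∧ H ≤ E / F ∧
            s.star E = s.star (F * H)) ∧
      (IsPStarMD s ↔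
        ∀ E F : Submodule D K, E ≠ ⊥ → E.FG → F ≠ ⊥ → F.FG →
          finStar s.star (F * (E / F)) = s.star E)) := by
  refine ⟨⟨⟨fun h E F hE hEfg hF hFfg => ?_, fun h I hI hIfg => ?_⟩,
      ⟨fun h E F hE _ hF hFfg => h.star_mul_div_eq s hE hF hFfg,
        fun h I hI hIfg => h 1 I one_ne_bot fg_one hI hIfg⟩⟩,
    ⟨⟨fun h E F hE hEfg hF hFfg => ?_, fun h I hI hIfg _ => ?_⟩,
      ⟨fun h E F hE hEfg hF hFfg => h.finStar_mul_div_eq s hE hEfg hF hFfg,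
        fun h I hI hIfg _ => ?_⟩⟩⟩
  · exact ⟨E / F, div_ne_bot hE hFfg, isFractional_div hEfg hF, le_rfl,
      (h.star_mul_div_eq s hE hF hFfg).symm⟩
  · obtain ⟨H, hH, -, hHI, hstar⟩ := h 1 I one_ne_bot fg_one hI hIfg
    exact s.isStarInvertible_of_star_one_eq_star_mul hI hH hHI hstar
  · exact exists_fg_star_eq_star_mul_of_finStar_mul_div_eq s hE hEfg hF hFfg
      (h.finStar_mul_div_eq s hE hEfg hF hFfg)
  · obtain ⟨H, hH, hHfg, hHI, hstar⟩ := h 1 I one_ne_bot fg_one hI hIfg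
    exact s.isStarInvertible_finStar_of_star_one_eq_star_mul hI hIfg hH hHfg hHI hstar
  · rw [IsStarInvertible, h 1 I one_ne_bot fg_one hI hIfg, s.finStar_eq_star one_ne_bot fg_one]

end Semistar
end

section
/- Let ⋆ be a semistar operation on an integral domain D and assume D is a ((⋆̄)_f, ⋆_f)-domain. If D is a ⋆-Noetherian domain, then D is ⋆-extracoherent. -/
/-!
For `G ≠ 0` inside a finitely generated `E`, `⋆`-Noetherianity yields a finitely generated
`J ⊆ G` with `J^⋆ = G^⋆`: after clearing denominators, choose `J` making the quasi-`⋆`-ideal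
`J^⋆ ∩ D` maximal; adjoining any further element of `G` cannot enlarge it. Take `G = E ∩ F`.
On finitely generated modules `⋆` agrees with the stable operation `⋆̄`, and `⋆̄` commutes
with finite intersections because `F^⋆` is closed under products, so
`E^⋆ ∩ F^⋆ = E^⋆̄ ∩ F^⋆̄ ⊆ (E ∩ F)^⋆̄ ⊆ (E ∩ F)^⋆ = J^⋆`.
-/

open Submodule

namespace Semistar

variable {D K : Type*} [CommRing D] [Field K] [Algebra D K]

section Colon

variable {R A : Type*} [CommSemiring R] [CommSemiring A] [Algebra R A]

theorem div_le_div_of_le_left {I I' J : Submodule R A} (h : I ≤ I') : I / J ≤ I' / J :=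
  Submodule.le_div_iff_mul_le.mpr ((Submodule.le_div_iff_mul_le.mp le_rfl).trans h)

theorem div_le_div_of_le_right {I J J' : Submodule R A} (h : J ≤ J') : I / J' ≤ I / J :=
  Submodule.le_div_iff_mul_le.mpr
    ((mul_le_mul_right h _).trans (Submodule.le_div_iff_mul_le.mp le_rfl))

theorem div_inf_div_le (I I' J : Submodule R A) : I / J ⊓ I' / J ≤ (I ⊓ I') / J :=
  Submodule.le_div_iff_mul_le.mpr <| le_inf
    ((mul_le_mul_left inf_le_left J).trans (Submodule.le_div_iff_mul_le.mp le_rfl))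
    ((mul_le_mul_left inf_le_right J).trans (Submodule.le_div_iff_mul_le.mp le_rfl))

end Colon

theorem SemistarOp.star_ne_bot_s10 (s : SemistarOp D K) {E : Submodule D K} (hE : E ≠ ⊥) :
    s.star E ≠ ⊥ :=
  ne_bot_of_le_ne_bot hE (s.le_star E hE)

theorem SemistarOp.one_mem_star_one (s : SemistarOp D K) : (1 : K) ∈ s.star 1 :=
  s.le_star 1 one_ne_zero (Submodule.one_le.mp le_rfl)

theorem SemistarOp.star_mul_star (s : SemistarOp D K) {A B : Submodule D K} (hA : A ≠ ⊥)
    (hB : B ≠ ⊥) : s.star (A * s.star B) = s.star (A * B) := by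
  have hAB : A * B ≠ ⊥ := mul_ne_zero hA hB
  have hle : A * s.star B ≤ s.star (A * B) := by
    refine Submodule.mul_le.mpr fun a ha b hb => ?_
    rcases eq_or_ne a 0 with rfl | ha0
    · simp
    have hspan : span D {a} ≠ ⊥ := span_singleton_eq_bot.not.mpr ha0
    have hab : a * b ∈ s.star (span D {a} * B) := by
      rw [s.star_smul_mul a ha0 B hB]
      exact mul_mem_mul (mem_span_singleton_self a) hb
    exact s.star_mono _ _ (mul_ne_zero hspan hB) hAB
      (mul_le_mul_left (span_singleton_le_iff_mem a A |>.mpr ha) B) hab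
  apply le_antisymm
  · calc s.star (A * s.star B) ≤ s.star (s.star (A * B)) :=
          s.star_mono _ _ (mul_ne_zero hA (s.star_ne_bot_s10 hB)) (s.star_ne_bot_s10 hAB) hle
      _ = s.star (A * B) := s.star_star _ hAB
  · exact s.star_mono _ _ hAB (mul_ne_zero hA (s.star_ne_bot_s10 hB))
      (mul_le_mul_right (s.le_star B hB) A)

theorem finStar_eq_of_fg {t : Submodule D K → Submodule D K}
    (hmono : ∀ A B : Submodule D K, A ≠ ⊥ → B ≠ ⊥ → A ≤ B → t A ≤ t B)
    {E : Submodule D K} (hE : E ≠ ⊥) (hfg : E.FG) : finStar t E = t E :=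
  le_antisymm (iSup₂_le fun F hF => hmono F E hF.1 hE hF.2.2)
    (le_iSup₂ (f := fun F (_ : F ≠ ⊥ ∧ F.FG ∧ F ≤ E) => t F) E ⟨hE, hfg, le_rfl⟩)

theorem idealToK_le_one (I : Ideal D) : (idealToK I : Submodule D K) ≤ 1 :=
  one_eq_range (R := D) (A := K) ▸ LinearMap.map_le_range

theorem idealToK_mono {I J : Ideal D} (h : I ≤ J) :
    (idealToK I : Submodule D K) ≤ idealToK J :=
  Submodule.map_mono h

theorem idealToK_top : (idealToK (⊤ : Ideal D) : Submodule D K) = 1 := by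
  rw [idealToK, Submodule.map_top, one_eq_range]

theorem idealToK_mul (I J : Ideal D) :
    (idealToK (I * J) : Submodule D K) = idealToK I * idealToK J :=
  Submodule.map_mul I J (Algebra.ofId D K)

theorem algebraMap_mem_idealToK {I : Ideal D} {x : D} (hx : x ∈ I) :
    algebraMap D K x ∈ (idealToK I : Submodule D K) :=
  ⟨x, hx, rfl⟩

theorem idealToK_comap {E : Submodule D K} (hE : E ≤ 1) :
    idealToK (comap (Algebra.linearMap D K) E) = E := by
  rw [idealToK, map_comap_eq, ← one_eq_range, inf_eq_right.mpr hE]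

/-- The ideal `J^t ∩ D` of `D`. -/
def quasiClosure (t : Submodule D K → Submodule D K) (J : Ideal D) : Ideal D :=
  comap (Algebra.linearMap D K) (t (idealToK J))

theorem idealToK_quasiClosure (t : Submodule D K → Submodule D K) (J : Ideal D) :
    (idealToK (quasiClosure t J) : Submodule D K) = t (idealToK J) ⊓ 1 := by
  rw [quasiClosure, idealToK, map_comap_eq, ← one_eq_range, inf_comm]

theorem le_quasiClosure (s : SemistarOp D K) {J : Ideal D}
    (hJ : (idealToK J : Submodule D K) ≠ ⊥) : J ≤ quasiClosure s.star J :=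
  fun _ hx => s.le_star _ hJ (algebraMap_mem_idealToK hx)

theorem quasiClosure_mono (s : SemistarOp D K) {I J : Ideal D}
    (hI : (idealToK I : Submodule D K) ≠ ⊥) (hJ : (idealToK J : Submodule D K) ≠ ⊥)
    (h : I ≤ J) : quasiClosure s.star I ≤ quasiClosure s.star J :=
  comap_mono (s.star_mono _ _ hI hJ (idealToK_mono h))

theorem isQuasiIdeal_quasiClosure (s : SemistarOp D K) {J : Ideal D}
    (hJ : (idealToK J : Submodule D K) ≠ ⊥) : IsQuasiIdeal s.star (quasiClosure s.star J) := by
  have hne : s.star (idealToK J) ⊓ 1 ≠ ⊥ :=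
    ne_bot_of_le_ne_bot hJ (le_inf (s.le_star _ hJ) (idealToK_le_one J))
  refine ⟨ne_bot_of_le_ne_bot ?_ (le_quasiClosure s hJ), ?_⟩
  · rintro rfl
    exact hJ (Submodule.map_bot _)
  rw [idealToK_quasiClosure]
  refine le_antisymm (le_inf ?_ inf_le_right) (le_inf (s.le_star _ hne) inf_le_right)
  calc s.star (s.star (idealToK J) ⊓ 1) ⊓ 1 ≤ s.star (s.star (idealToK J)) :=
        inf_le_left.trans (s.star_mono _ _ hne (s.star_ne_bot_s10 hJ) inf_le_left)
    _ = s.star (idealToK J) := s.star_star _ hJ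

theorem IsStarNoetherian.exists_maximal {t : Submodule D K → Submodule D K}
    (h : IsStarNoetherian t) {S : Set (Ideal D)} (hS : S.Nonempty)
    (hquasi : ∀ I ∈ S, IsQuasiIdeal t I) : ∃ M ∈ S, ∀ I ∈ S, M ≤ I → I = M := by
  have : WellFoundedGT {I : Ideal D // IsQuasiIdeal t I} :=
    wellFoundedGT_iff_monotone_chain_condition.mpr fun c => by
      obtain ⟨n, hn⟩ := h (fun n => (c n).1) (fun n => (c n).2) fun _ _ hab => c.monotone hab
      exact ⟨n, fun m hm => Subtype.ext (hn m hm).symm⟩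
  obtain ⟨I₀, hI₀S⟩ := hS
  obtain ⟨⟨M, hM⟩, hMS, hmax⟩ :=
    wellFounded_gt.has_min {I : {I : Ideal D // IsQuasiIdeal t I} | I.1 ∈ S}
      ⟨⟨I₀, hquasi I₀ hI₀S⟩, hI₀S⟩
  refine ⟨M, hMS, fun I hIS hMI => ?_⟩
  by_contra hne
  exact hmax ⟨I, hquasi I hIS⟩ hIS
    (lt_of_le_of_ne hMI fun h => hne (congrArg Subtype.val h).symm)

theorem top_mem_starLS [Nontrivial D] (s : SemistarOp D K) : (⊤ : Ideal D) ∈ starLS s :=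
  ⟨top_ne_bot, by rw [idealToK_top]⟩

theorem barStar_mono (s : SemistarOp D K) {E F : Submodule D K} (h : E ≤ F) :
    barStar s E ≤ barStar s F :=
  iSup₂_mono fun _ _ => div_le_div_of_le_left h

theorem star_eq_barStar_of_fg (s : SemistarOp D K)
    (hdom : StarEq (finStar (barStar s)) (finStar s.star)) {E : Submodule D K} (hE : E ≠ ⊥)
    (hfg : E.FG) : s.star E = barStar s E := by
  rw [← finStar_eq_of_fg s.star_mono hE hfg, ← hdom E hE,
    finStar_eq_of_fg (fun _ _ _ _ h => barStar_mono s h) hE hfg]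

section FractionRing

variable [IsFractionRing D K]

theorem idealToK_ne_bot {I : Ideal D} (h : I ≠ ⊥) : (idealToK I : Submodule D K) ≠ ⊥ := by
  rw [idealToK, ← Submodule.map_bot (Algebra.linearMap D K)]
  exact (map_injective_of_injective (IsFractionRing.injective D K)).ne h

variable (s : SemistarOp D K)

theorem barStar_le_star {E : Submodule D K} (hE : E ≠ ⊥) : barStar s E ≤ s.star E := by
  refine iSup₂_le fun J hJ x hx => ?_
  rcases eq_or_ne x 0 with rfl | hx0
  · exact zero_mem _
  have hJ' : (idealToK J : Submodule D K) ≠ ⊥ := idealToK_ne_bot hJ.1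
  have hle : span D {x} * idealToK J ≤ E := by
    rw [span_singleton_mul]
    rintro _ ⟨y, hy, rfl⟩
    exact mem_div_iff_forall_mul_mem.mp hx y hy
  have hx' : x ∈ s.star (span D {x} * idealToK J) := by
    rw [s.star_smul_mul x hx0 _ hJ', hJ.2]
    simpa using mul_mem_mul (mem_span_singleton_self x) s.one_mem_star_one
  exact s.star_mono _ _ (mul_ne_zero (span_singleton_eq_bot.not.mpr hx0) hJ') hE hle hx'

theorem exists_fg_ideal_le_star_eq (hnoeth : IsStarNoetherian s.star) {I : Ideal D}
    (hI : I ≠ ⊥) :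
    ∃ J ≤ I, J ≠ ⊥ ∧ J.FG ∧ s.star (idealToK J) = s.star (idealToK I) := by
  set T : Set (Ideal D) := {J | J ≤ I ∧ J ≠ ⊥ ∧ J.FG}
  obtain ⟨a, haI, ha⟩ := exists_mem_ne_zero_of_ne_bot hI
  have haT : Ideal.span {a} ∈ T := ⟨(Ideal.span_singleton_le_iff_mem I).mpr haI,
    Ideal.span_singleton_eq_bot.not.mpr ha, fg_span_singleton a⟩
  obtain ⟨_, ⟨J, hJT, rfl⟩, hmax⟩ :=
    hnoeth.exists_maximal ⟨_, Set.mem_image_of_mem _ haT⟩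
    (by rintro _ ⟨J, hJ, rfl⟩; exact isQuasiIdeal_quasiClosure s (idealToK_ne_bot hJ.2.1))
  obtain ⟨hJI, hJ, hJfg⟩ := hJT
  have hJ' : (idealToK J : Submodule D K) ≠ ⊥ := idealToK_ne_bot hJ
  -- adjoining any `x ∈ I` to `J` cannot enlarge the maximal `J^⋆ ∩ D`, so `x ∈ J^⋆`
  have hIJ : I ≤ quasiClosure s.star J := fun x hx => by
    have hJx : J ⊔ Ideal.span {x} ∈ T :=
      ⟨sup_le hJI ((Ideal.span_singleton_le_iff_mem I).mpr hx),
        ne_bot_of_le_ne_bot hJ le_sup_left, Submodule.FG.sup hJfg (fg_span_singleton x)⟩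
    have hstable : quasiClosure s.star (J ⊔ Ideal.span {x}) = quasiClosure s.star J :=
      hmax _ ⟨_, hJx, rfl⟩ (quasiClosure_mono s hJ' (idealToK_ne_bot hJx.2.1) le_sup_left)
    rw [← hstable]
    exact le_quasiClosure s (idealToK_ne_bot hJx.2.1)
      (mem_sup_right (Ideal.mem_span_singleton_self x))
  have hIle : (idealToK I : Submodule D K) ≤ s.star (idealToK J) :=
    (idealToK_mono hIJ).trans ((idealToK_quasiClosure s.star J).trans_le inf_le_left)
  refine ⟨J, hJI, hJ, hJfg, le_antisymm (s.star_mono _ _ hJ' (idealToK_ne_bot hI)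
    (idealToK_mono hJI)) ?_⟩
  calc s.star (idealToK I) ≤ s.star (s.star (idealToK J)) :=
        s.star_mono _ _ (idealToK_ne_bot hI) (s.star_ne_bot_s10 hJ') hIle
    _ = s.star (idealToK J) := s.star_star _ hJ'

theorem exists_fg_le_star_eq_of_le_one (hnoeth : IsStarNoetherian s.star) {G : Submodule D K}
    (hG : G ≠ ⊥) (hG1 : G ≤ 1) : ∃ J ≤ G, J ≠ ⊥ ∧ J.FG ∧ s.star J = s.star G := by
  have hI : comap (Algebra.linearMap D K) G ≠ ⊥ := by
    rintro h
    exact hG (by rw [← idealToK_comap hG1, h, idealToK, Submodule.map_bot])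
  obtain ⟨J, hJI, hJ, hJfg, hJstar⟩ := exists_fg_ideal_le_star_eq s hnoeth hI
  rw [idealToK_comap hG1] at hJstar
  exact ⟨idealToK J, (idealToK_mono hJI).trans (idealToK_comap hG1).le, idealToK_ne_bot hJ,
    Submodule.FG.map _ hJfg, hJstar⟩

variable [IsDomain D]

theorem mul_mem_starLS {I J : Ideal D} (hI : I ∈ starLS s) (hJ : J ∈ starLS s) :
    I * J ∈ starLS s := by
  have hI' := idealToK_ne_bot (K := K) hI.1
  refine ⟨mul_ne_zero hI.1 hJ.1, ?_⟩
  rw [idealToK_mul, ← s.star_mul_star hI' (idealToK_ne_bot hJ.1), hJ.2,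
    s.star_mul_star hI' one_ne_zero, mul_one, hI.2]

theorem mem_barStar {E : Submodule D K} {x : K} :
    x ∈ barStar s E ↔ ∃ J ∈ starLS s, x ∈ E / (idealToK J : Submodule D K) := by
  have : Nonempty (starLS s) := ⟨⟨⊤, top_mem_starLS s⟩⟩
  have hdir : Directed (· ≤ ·) fun J : starLS s => E / (idealToK J.1 : Submodule D K) := by
    rintro ⟨I, hI⟩ ⟨J, hJ⟩
    exact ⟨⟨I * J, mul_mem_starLS s hI hJ⟩,
      div_le_div_of_le_right (idealToK_mono Ideal.mul_le_left),
      div_le_div_of_le_right (idealToK_mono Ideal.mul_le_right)⟩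
  rw [barStar, iSup_subtype', mem_iSup_of_directed _ hdir, Subtype.exists]
  simp only [exists_prop]

theorem barStar_inf_le (E F : Submodule D K) :
    barStar s E ⊓ barStar s F ≤ barStar s (E ⊓ F) := by
  rintro x ⟨hxE, hxF⟩
  obtain ⟨I, hI, hxI⟩ := (mem_barStar s).mp hxE
  obtain ⟨J, hJ, hxJ⟩ := (mem_barStar s).mp hxF
  refine (mem_barStar s).mpr ⟨I * J, mul_mem_starLS s hI hJ, div_inf_div_le E F _ ⟨?_, ?_⟩⟩
  · exact div_le_div_of_le_right (idealToK_mono Ideal.mul_le_left) hxI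
  · exact div_le_div_of_le_right (idealToK_mono Ideal.mul_le_right) hxJ

theorem star_inf_eq_of_fg (hdom : StarEq (finStar (barStar s)) (finStar s.star))
    {E F : Submodule D K} (hE : E ≠ ⊥) (hEfg : E.FG) (hF : F ≠ ⊥) (hFfg : F.FG)
    (hEF : E ⊓ F ≠ ⊥) : s.star (E ⊓ F) = s.star E ⊓ s.star F := by
  refine le_antisymm
    (le_inf (s.star_mono _ _ hEF hE inf_le_left) (s.star_mono _ _ hEF hF inf_le_right)) ?_
  calc s.star E ⊓ s.star F = barStar s E ⊓ barStar s F := by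
        rw [star_eq_barStar_of_fg s hdom hE hEfg, star_eq_barStar_of_fg s hdom hF hFfg]
    _ ≤ barStar s (E ⊓ F) := barStar_inf_le s E F
    _ ≤ s.star (E ⊓ F) := barStar_le_star s hEF

theorem exists_fg_le_star_eq (hnoeth : IsStarNoetherian s.star) {G E : Submodule D K}
    (hG : G ≠ ⊥) (hGE : G ≤ E) (hE : E.FG) :
    ∃ J ≤ G, J ≠ ⊥ ∧ J.FG ∧ s.star J = s.star G := by
  obtain ⟨a, ha, hint⟩ := FractionalIdeal.isFractional_of_fg (S := nonZeroDivisors D) hE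
  set x : K := algebraMap D K a
  have hx : x ≠ 0 := IsFractionRing.to_map_ne_zero_of_mem_nonZeroDivisors ha
  have hxinv : x⁻¹ ≠ 0 := inv_ne_zero hx
  have hcancel (H : Submodule D K) : span D {x⁻¹} * (span D {x} * H) = H := by
    rw [← mul_assoc, span_mul_span, Set.singleton_mul_singleton, inv_mul_cancel₀ hx,
      ← one_eq_span, one_mul]
  have hxG : span D {x} * G ≠ ⊥ := mul_ne_zero (span_singleton_eq_bot.not.mpr hx) hG
  have hxG1 : span D {x} * G ≤ 1 := by
    rw [span_singleton_mul]
    rintro _ ⟨g, hg, rfl⟩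
    obtain ⟨c, hc⟩ := hint g (hGE hg)
    exact mem_one.mpr ⟨c, hc.trans (Algebra.smul_def a g)⟩
  obtain ⟨J, hJle, hJ, hJfg, hJstar⟩ := exists_fg_le_star_eq_of_le_one s hnoeth hxG hxG1
  refine ⟨span D {x⁻¹} * J, (mul_le_mul_right hJle _).trans (hcancel G).le,
    mul_ne_zero (span_singleton_eq_bot.not.mpr hxinv) hJ, (fg_span_singleton _).mul hJfg, ?_⟩
  rw [s.star_smul_mul _ hxinv _ hJ, hJstar, ← s.star_smul_mul _ hxinv _ hxG, hcancel]

end FractionRing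

theorem statement10 {D K : Type*} [CommRing D] [IsDomain D] [Field K] [Algebra D K]
    [IsFractionRing D K] (s : SemistarOp D K)
    (hdom : StarEq (finStar (barStar s)) (finStar s.star))
    (hnoeth : IsStarNoetherian s.star) :
    IsExtraCoherent s.star := by
  intro E F hE hEfg hF hFfg hEF
  obtain ⟨J, hJle, hJ, hJfg, hJstar⟩ := exists_fg_le_star_eq s hnoeth hEF inf_le_left hEfg
  exact ⟨J, hJ, hJfg, hJle, hJstar.trans (star_inf_eq_of_fg s hdom hE hEfg hF hFfg hEF)⟩

end Semistar
end
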